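/- arXiv:2503.04424 — 2 statements merged into one kernel-verified Lean document; each statement's English description precedes it below -/
import Mathlib

section
/- Let p, d ≥ 1, let A be a real symmetric p×p matrix, B a real p×d matrix, C a real symmetric d×d matrix, and suppose the block matrix M = [[A, B], [Bᵀ, C]] is positive definite. Let Σ = C − Bᵀ A⁻¹ B be the Schur complement of A in M. Then det(M) / det(A) ≤ (d^{−1/2} · trace Σ)^d. -/
open Matrix

-- trace of hermitian matrix = sum of eigenvalues (real)
lemma trace_eq_sum_eigs {n : ℕ} {A : Matrix (Fin n) (Fin n) ℝ} (hA : A.IsHermitian) :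
    A.trace = ∑ i, hA.eigenvalues i := by
  conv_lhs => rw [hA.spectral_theorem]
  rw [Unitary.conjStarAlgAut_apply]
  rw [Matrix.trace_mul_cycle,
    (Matrix.mem_unitaryGroup_iff').mp (Matrix.IsHermitian.eigenvectorUnitary hA).2, Matrix.one_mul,
    Matrix.trace_diagonal]
  simp

theorem stmt5 (p d : ℕ) (hp : 1 ≤ p) (hd : 1 ≤ d)
    (A : Matrix (Fin p) (Fin p) ℝ) (B : Matrix (Fin p) (Fin d) ℝ)
    (C : Matrix (Fin d) (Fin d) ℝ) (hA : A.IsHermitian) (hC : C.IsHermitian)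
    (hM : (Matrix.fromBlocks A B Bᵀ C).PosDef) :
    (Matrix.fromBlocks A B Bᵀ C).det / A.det ≤
      ((d : ℝ) ^ (-(1 : ℝ) / 2) * (C - Bᵀ * A⁻¹ * B).trace) ^ d := by
  -- A is positive definite
  have hApd : A.PosDef := by
    refine posDef_iff_dotProduct_mulVec.mpr ⟨hA, fun x hx => ?_⟩
    have := (posDef_iff_dotProduct_mulVec.mp hM).2 (x := x ⊕ᵥ (0 : Fin d → ℝ)) (by
      intro h; apply hx; funext i; exact congrFun h (Sum.inl i))
    simpa [Matrix.fromBlocks_mulVec, Matrix.dotProduct_block] using this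
  haveI := hApd.isUnit.invertible
  have hBt : Bᴴ = Bᵀ := by ext i j; simp [Matrix.conjTranspose_apply]
  -- Schur complement positive definite
  have hSherm : (C - Bᵀ * A⁻¹ * B).IsHermitian := by
    rw [← hBt]; exact hC.sub (Matrix.isHermitian_conjTranspose_mul_mul B hA.inv)
  have hS : (C - Bᵀ * A⁻¹ * B).PosDef := by
    refine posDef_iff_dotProduct_mulVec.mpr ⟨hSherm, fun x hx => ?_⟩
    have key := Matrix.schur_complement_eq₁₁ (α := ℝ) B C (-((A⁻¹ * B) *ᵥ x)) x hA
    rw [hBt] at key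
    have h2 := (posDef_iff_dotProduct_mulVec.mp hM).2 (x := (-((A⁻¹ * B) *ᵥ x)) ⊕ᵥ x) (by
      intro h; apply hx; funext i; exact congrFun h (Sum.inr i))
    simp only [RCLike.re_to_real, star_trivial] at h2 key ⊢
    rw [Matrix.dotProduct_mulVec] at h2 ⊢
    rw [key, neg_add_cancel] at h2
    simpa using h2
  -- determinant identity
  have hdet : (Matrix.fromBlocks A B Bᵀ C).det = A.det * (C - Bᵀ * A⁻¹ * B).det := by
    rw [Matrix.det_fromBlocks₁₁, Matrix.invOf_eq_nonsing_inv]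
  have hdetA : 0 < A.det := hApd.det_pos
  rw [hdet, mul_comm, mul_div_assoc, div_self (ne_of_gt hdetA), mul_one]
  -- eigenvalues
  set lam := hSherm.eigenvalues with hlam
  have hlampos : ∀ i, 0 < lam i := hS.eigenvalues_pos
  have hdetS : (C - Bᵀ * A⁻¹ * B).det = ∏ i, lam i := by
    have := hSherm.det_eq_prod_eigenvalues; simpa using this
  have htr : (C - Bᵀ * A⁻¹ * B).trace = ∑ i, lam i := trace_eq_sum_eigs hSherm
  have htrpos : 0 < (C - Bᵀ * A⁻¹ * B).trace := by
    rw [htr]; exact Finset.sum_pos (fun i _ => hlampos i) (by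
      simp [Finset.univ_nonempty_iff, ← Fin.pos_iff_nonempty]; omega)
  -- AM-GM
  have hd0 : (0:ℝ) < d := by exact_mod_cast hd
  have amgm : (∏ i, lam i) ≤ ((∑ i, lam i) / d) ^ d := by
    have h := Real.geom_mean_le_arith_mean_weighted Finset.univ (fun _ => (d:ℝ)⁻¹) lam
      (fun _ _ => by positivity) (by simp [Finset.card_univ, mul_comm]; field_simp)
      (fun i _ => (hlampos i).le)
    have h2 : ∏ i, lam i ^ ((d:ℝ)⁻¹) ≤ (∑ i, lam i) / d := by
      simpa [Finset.mul_sum, div_eq_mul_inv, mul_comm, Finset.sum_mul] using h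
    have h3 : ((∏ i, lam i ^ ((d:ℝ)⁻¹)) : ℝ) ^ d ≤ ((∑ i, lam i) / d) ^ d := by
      apply pow_le_pow_left₀ (Finset.prod_nonneg fun i _ => Real.rpow_nonneg (hlampos i).le _) h2
    calc (∏ i, lam i) = (∏ i, lam i ^ ((d:ℝ)⁻¹)) ^ d := by
          rw [← Finset.prod_pow]
          refine Finset.prod_congr rfl fun i _ => ?_
          rw [← Real.rpow_natCast (lam i ^ ((d:ℝ)⁻¹)) d, ← Real.rpow_mul (hlampos i).le]
          rw [inv_mul_cancel₀ (ne_of_gt hd0), Real.rpow_one]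
      _ ≤ _ := h3
  rw [hdetS]
  refine amgm.trans ?_
  rw [← htr]
  apply pow_le_pow_left₀ (div_nonneg htrpos.le hd0.le)
  rw [div_eq_inv_mul]
  apply mul_le_mul_of_nonneg_right _ htrpos.le
  -- 1/d ≤ d^(-1/2)
  rw [neg_div, Real.rpow_neg hd0.le]
  apply inv_anti₀ (by positivity) ?_
  calc (d:ℝ) ^ ((1:ℝ)/2) ≤ (d:ℝ) ^ (1:ℝ) := by
        apply Real.rpow_le_rpow_of_exponent_le (by exact_mod_cast hd); norm_num
    _ = d := Real.rpow_one _
end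

section
/- Let n_b and b be positive integers and set m = n_b · b. Then, as an identity of real numbers, n_b · (b³/6 − b²/4 + b/12) + ((n_b² − n_b)/2) · (b³/2 − b²/2) + (n_b³/6 − n_b²/2 + n_b/3) · b³ + ((n_b² − n_b)/2) · (b³/2) = m³/6 − m²/4 + m/12. In particular, the total FLOP count of the blocked LDL/Cholesky-based MEMDET algorithm is independent of the number of blocks n_b and equals the FLOP count of the unblocked factorization. -/
theorem stmt14 (nb b m : ℕ) (hnb : 1 ≤ nb) (hb : 1 ≤ b) (hm : m = nb * b) :
    (nb : ℝ) * ((b : ℝ) ^ 3 / 6 - (b : ℝ) ^ 2 / 4 + (b : ℝ) / 12)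
      + (((nb : ℝ) ^ 2 - (nb : ℝ)) / 2) * ((b : ℝ) ^ 3 / 2 - (b : ℝ) ^ 2 / 2)
      + ((nb : ℝ) ^ 3 / 6 - (nb : ℝ) ^ 2 / 2 + (nb : ℝ) / 3) * (b : ℝ) ^ 3
      + (((nb : ℝ) ^ 2 - (nb : ℝ)) / 2) * ((b : ℝ) ^ 3 / 2)
    = (m : ℝ) ^ 3 / 6 - (m : ℝ) ^ 2 / 4 + (m : ℝ) / 12 := by
  subst hm; push_cast; ring
end
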